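/- arXiv:1203.4457 — 5 statements merged into one kernel-verified Lean document; each statement's English description precedes it below -/
import Mathlib

section
/- If m and n are relatively prime odd positive integers, then for every integer k one has G_k(mn) = G_k(m) G_k(n). -/
/-!
Reindex the sum over residues mod `m * n` by `(a, b) ↦ a * n + b * m`, which is a bijection from
residues mod `m` and mod `n` by the Chinese remainder theorem. Under this substitution the summand
for `m * n` splits into the summands for `m` and `n` times the reciprocity sign
`J(n | m) * J(m | n)`, which is `-1` exactly when `m ≡ n ≡ 3 mod 4`. The normalising factor
in front of the sum is `1` for `n ≡ 1` and `-i` for `n ≡ 3 mod 4`, so it absorbs this sign.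
-/

open Complex

/-- The Gauss-type sum `G_k(n)` of Soundararajan. -/
noncomputable def Gsum (k : ℤ) (n : ℕ) : ℂ :=
  ((1 - I) / 2 + (jacobiSym (-1) n : ℂ) * (1 + I) / 2) *
    ∑ a ∈ Finset.range n, (jacobiSym (a : ℤ) n : ℂ) *
      Complex.exp (2 * Real.pi * I * a * k / n)

open Finset Function

theorem ZMod.sum_val_eq_sum_range {M : Type*} [AddCommMonoid M] (N : ℕ) [NeZero N]
    (f : ℕ → M) : ∑ x : ZMod N, f x.val = ∑ a ∈ range N, f a := by
  obtain ⟨n, rfl⟩ : ∃ n, N = n + 1 := Nat.exists_eq_succ_of_ne_zero (NeZero.ne N)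
  exact Fin.sum_univ_eq_sum_range f (n + 1)

theorem ZMod.natCast_val_mul_add_val_mul {m : ℕ} [NeZero m] (a : ZMod m) (b n : ℕ) :
    ((a.val * n + b * m : ℕ) : ZMod m) = a * n := by
  push_cast
  rw [ZMod.natCast_self, mul_zero, add_zero, ZMod.natCast_zmod_val]

theorem ZMod.bijective_natCast_val_mul_add_val_mul {m n : ℕ} [NeZero m] [NeZero n]
    (hmn : m.Coprime n) :
    Bijective fun p : ZMod m × ZMod n => ((p.1.val * n + p.2.val * m : ℕ) : ZMod (m * n)) := by
  refine (Fintype.bijective_iff_injective_and_card _).mpr ⟨?_, by simp [ZMod.card]⟩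
  intro p q hpq
  have h₁ := congrArg (ZMod.castHom (dvd_mul_right m n) (ZMod m)) hpq
  have h₂ := congrArg (ZMod.castHom (dvd_mul_left n m) (ZMod n)) hpq
  simp only [map_natCast] at h₁ h₂
  rw [add_comm, ZMod.natCast_val_mul_add_val_mul, add_comm,
    ZMod.natCast_val_mul_add_val_mul] at h₂
  rw [ZMod.natCast_val_mul_add_val_mul, ZMod.natCast_val_mul_add_val_mul] at h₁
  exact Prod.ext (((ZMod.isUnit_iff_coprime n m).mpr hmn.symm).mul_right_cancel h₁)
    (((ZMod.isUnit_iff_coprime m n).mpr hmn).mul_right_cancel h₂)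

theorem Function.Periodic.sum_range_mul {M : Type*} [AddCommMonoid M] {f : ℕ → M} {m n : ℕ}
    (hf : Periodic f (m * n)) (hmn : m.Coprime n) :
    ∑ c ∈ range (m * n), f c = ∑ a ∈ range m, ∑ b ∈ range n, f (a * n + b * m) := by
  obtain rfl | hm := eq_or_ne m 0
  · simp
  obtain rfl | hn := eq_or_ne n 0
  · simp
  have : NeZero m := ⟨hm⟩
  have : NeZero n := ⟨hn⟩
  rw [← ZMod.sum_val_eq_sum_range,
    ← (ZMod.bijective_natCast_val_mul_add_val_mul hmn).sum_comp, Fintype.sum_prod_type,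
    ← ZMod.sum_val_eq_sum_range]
  refine sum_congr rfl fun x _ => ?_
  rw [← ZMod.sum_val_eq_sum_range]
  simp only [ZMod.val_natCast, hf.map_mod_nat]

theorem jacobiSym_mul_add_mul (a b : ℤ) {m n : ℕ} (hm : m ≠ 0) (hn : n ≠ 0) :
    jacobiSym (a * n + b * m) (m * n) =
      jacobiSym n m * jacobiSym m n * (jacobiSym a m * jacobiSym b n) := by
  rw [jacobiSym.mul_right' _ hm hn,
    jacobiSym.mod_left' (b := m) (a₂ := a * n) (Int.add_mul_emod_self_right ..),
    jacobiSym.mod_left' (b := n) (a₂ := b * m) (by rw [add_comm, Int.add_mul_emod_self_right]),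
    jacobiSym.mul_left, jacobiSym.mul_left]
  ring

theorem jacobiSym_mul_jacobiSym_of_coprime {m n : ℕ} (hm : Odd m) (hn : Odd n)
    (hmn : m.Coprime n) :
    jacobiSym n m * jacobiSym m n = if n % 4 = 3 ∧ m % 4 = 3 then -1 else 1 := by
  have hsq : jacobiSym m n ^ 2 = 1 := jacobiSym.sq_one (by rwa [Int.gcd_natCast_natCast])
  rw [← jacobiSym.quadratic_reciprocity_if (Nat.odd_iff.mp hn) (Nat.odd_iff.mp hm)]
  split_ifs
  · linear_combination -hsq
  · linear_combination hsq

noncomputable def epsFactor (n : ℕ) : ℂ :=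
  (1 - I) / 2 + (jacobiSym (-1) n : ℂ) * (1 + I) / 2

theorem epsFactor_of_odd {n : ℕ} (hn : Odd n) : epsFactor n = if n % 4 = 3 then -I else 1 := by
  rw [epsFactor, jacobiSym.at_neg_one hn]
  rcases Nat.odd_mod_four_iff.mp (Nat.odd_iff.mp hn) with h | h
  · rw [ZMod.χ₄_nat_one_mod_four h, if_neg (by omega)]
    push_cast; ring
  · rw [ZMod.χ₄_nat_three_mod_four h, if_pos h]
    push_cast; ring

theorem epsFactor_mul_mul_jacobiSym {m n : ℕ} (hm : Odd m) (hn : Odd n) (hmn : m.Coprime n) :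
    epsFactor (m * n) * (jacobiSym n m * jacobiSym m n : ℤ) = epsFactor m * epsFactor n := by
  rw [epsFactor_of_odd (hm.mul hn), epsFactor_of_odd hm, epsFactor_of_odd hn,
    jacobiSym_mul_jacobiSym_of_coprime hm hn hmn, Nat.mul_mod]
  rcases Nat.odd_mod_four_iff.mp (Nat.odd_iff.mp hm) with h₁ | h₁ <;>
    rcases Nat.odd_mod_four_iff.mp (Nat.odd_iff.mp hn) with h₂ | h₂ <;> simp [h₁, h₂]

noncomputable def jacobiExpTerm (k : ℤ) (n a : ℕ) : ℂ :=
  jacobiSym a n * exp (2 * Real.pi * I * a * k / n)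

theorem Gsum_eq_epsFactor_mul_sum (k : ℤ) (n : ℕ) :
    Gsum k n = epsFactor n * ∑ a ∈ range n, jacobiExpTerm k n a := rfl

theorem jacobiExpTerm_periodic (k : ℤ) (n : ℕ) : Periodic (jacobiExpTerm k n) n := by
  intro a
  obtain rfl | hn := eq_or_ne n 0
  · rw [add_zero]
  have hJ : jacobiSym ((a + n : ℕ) : ℤ) n = jacobiSym a n :=
    jacobiSym.mod_left' (by push_cast; exact Int.add_emod_right ..)
  have hexp : 2 * Real.pi * I * ((a + n : ℕ) : ℂ) * k / n =
      2 * Real.pi * I * a * k / n + k * (2 * Real.pi * I) := by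
    push_cast; field_simp
  rw [jacobiExpTerm, jacobiExpTerm, hJ, hexp, exp_add, exp_int_mul_two_pi_mul_I, mul_one]

theorem jacobiExpTerm_mul_add_mul (k : ℤ) {m n : ℕ} (hm : m ≠ 0) (hn : n ≠ 0) (a b : ℕ) :
    jacobiExpTerm k (m * n) (a * n + b * m) =
      (jacobiSym n m * jacobiSym m n : ℤ) * (jacobiExpTerm k m a * jacobiExpTerm k n b) := by
  have hexp : 2 * Real.pi * I * ((a * n + b * m : ℕ) : ℂ) * k / ((m * n : ℕ) : ℂ) =
      2 * Real.pi * I * a * k / m + 2 * Real.pi * I * b * k / n := by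
    push_cast; field_simp
  rw [jacobiExpTerm, jacobiExpTerm, jacobiExpTerm, hexp, exp_add]
  push_cast [jacobiSym_mul_add_mul a b hm hn]
  ring

theorem Gsum_mul_general (m n : ℕ) (hm : Odd m) (hn : Odd n)
    (hmn : Nat.Coprime m n) (k : ℤ) :
    Gsum k (m * n) = Gsum k m * Gsum k n := by
  simp only [Gsum_eq_epsFactor_mul_sum]
  rw [(jacobiExpTerm_periodic k (m * n)).sum_range_mul hmn]
  simp only [jacobiExpTerm_mul_add_mul k hm.pos.ne' hn.pos.ne', ← mul_sum, ← sum_mul]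
  rw [mul_mul_mul_comm, ← epsFactor_mul_mul_jacobiSym hm hn hmn, mul_assoc]

/-- The Gauss-type sum `G_k` is multiplicative in its (odd) argument. -/
theorem Gsum_mul (m n : ℕ) (hm : Odd m) (hn : Odd n) (hm1 : 1 ≤ m) (hn1 : 1 ≤ n)
    (hmn : Nat.Coprime m n) (k : ℤ) :
    Gsum k (m * n) = Gsum k m * Gsum k n :=
  Gsum_mul_general m n hm hn hmn k
end

section
/- Let z ∈ ℂ and let f be a complex-valued function on the positive integers such that ∑_{k≥1} |f(k)| < ∞ and f(4k) = 4^{−z} f(k) for every positive integer k. Then ∑_{k≥1} (−1)^k f(k) = (2^{1−2z} − 1) · ∑_{k₁ odd squarefree ≥ 1} ∑_{k₂ ≥ 1} f(k₁ k₂²) + ∑_{k₁ even squarefree ≥ 1} ∑_{k₂ ≥ 1} f(k₁ k₂²). -/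
open Function Set

/-- Uniqueness of the squarefree decomposition `n = a * b ^ 2`. -/
private lemma sf_unique {a b c d : ℕ} (ha : Squarefree a) (hb : b ≠ 0)
    (hc : Squarefree c) (hd : d ≠ 0) (h : a * b ^ 2 = c * d ^ 2) : a = c ∧ b = d := by
  have ha0 : a ≠ 0 := ha.ne_zero
  have hc0 : c ≠ 0 := hc.ne_zero
  have hfac : ∀ p : ℕ, a.factorization p + 2 * b.factorization p
      = c.factorization p + 2 * d.factorization p := by
    intro p
    have h' := congrArg (fun n : ℕ => n.factorization p) h
    simpa [Nat.factorization_mul ha0 (pow_ne_zero 2 hb),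
      Nat.factorization_mul hc0 (pow_ne_zero 2 hd), Nat.factorization_pow,
      Finsupp.add_apply, Finsupp.smul_apply, smul_eq_mul] using h'
  have hac : a.factorization = c.factorization := by
    ext p
    have h1 := ha.natFactorization_le_one p
    have h2 := hc.natFactorization_le_one p
    have h3 := hfac p
    omega
  have hAC : a = c := Nat.factorization_inj ha0 hc0 hac
  subst hAC
  have hbd : b ^ 2 = d ^ 2 := Nat.eq_of_mul_eq_mul_left (Nat.pos_of_ne_zero ha0) h
  exact ⟨rfl, Nat.pow_left_injective (by norm_num) hbd⟩

private lemma two_cpow_eq (z : ℂ) : (2 : ℂ) ^ (1 - 2 * z) = 2 * (4 : ℂ) ^ (-z) := by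
  have h2 : (2 : ℂ) ≠ 0 := two_ne_zero
  have h4' : (4 : ℂ) ^ (-z) = (2 : ℂ) ^ (-z) * (2 : ℂ) ^ (-z) := by
    have h4 := Complex.mul_cpow_ofReal_nonneg (a := 2) (b := 2) (by norm_num) (by norm_num) (-z)
    norm_num at h4
    exact h4
  have h3 : (1 : ℂ) - 2 * z = 1 + (-z + -z) := by ring
  rw [h3, Complex.cpow_add _ _ h2, Complex.cpow_add _ _ h2, Complex.cpow_one, h4']

/-- Splitting an alternating sum according to the squarefree kernel, for a
function satisfying `f(4k) = 4^{-z} f(k)`. -/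
theorem alternating_sum_squarefree_split (z : ℂ) (f : ℕ → ℂ)
    (hsum : Summable (fun k : ℕ => ‖f (k + 1)‖))
    (hrec : ∀ k : ℕ, 1 ≤ k → f (4 * k) = (4 : ℂ) ^ (-z) * f k) :
    ∑' k : ℕ, (if k = 0 then 0 else (-1 : ℂ) ^ k * f k) =
      ((2 : ℂ) ^ (1 - 2 * z) - 1) *
        (∑' k₁ : ℕ, ∑' k₂ : ℕ,
          if Squarefree k₁ ∧ Odd k₁ ∧ 1 ≤ k₂ then f (k₁ * k₂ ^ 2) else 0) +
      (∑' k₁ : ℕ, ∑' k₂ : ℕ,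
          if Squarefree k₁ ∧ Even k₁ ∧ 1 ≤ k₂ then f (k₁ * k₂ ^ 2) else 0) := by
  classical
  set c : ℂ := (4 : ℂ) ^ (-z) with hcdef
  -- the function extended by zero at 0
  set g : ℕ → ℂ := fun n => if n = 0 then 0 else f n with hgdef
  have hg0 : g 0 = 0 := by simp [hgdef]
  have hgf : ∀ n, n ≠ 0 → g n = f n := fun n hn => by simp [hgdef, hn]
  have hgsum : Summable fun n => ‖g n‖ := by
    rw [← summable_nat_add_iff 1]
    have : (fun n : ℕ => ‖g (n + 1)‖) = fun n : ℕ => ‖f (n + 1)‖ := by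
      funext n; rw [hgf (n + 1) (Nat.succ_ne_zero n)]
    rw [this]; exact hsum
  have hgs : Summable g := hgsum.of_norm
  have hgrec : ∀ m : ℕ, m ≠ 0 → g (4 * m) = c * g m := by
    intro m hm
    rw [hgf _ (by positivity), hgf _ hm]
    exact hrec m (Nat.one_le_iff_ne_zero.mpr hm)
  -- the master pair function
  set Φ : ℕ × ℕ → ℂ := fun p => if Squarefree p.1 ∧ 1 ≤ p.2 then g (p.1 * p.2 ^ 2) else 0
    with hΦdef
  have hΦn : Summable fun p => ‖Φ p‖ := by
    have heq : (fun p : ℕ × ℕ => ‖Φ p‖)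
        = Set.indicator {p : ℕ × ℕ | Squarefree p.1 ∧ 1 ≤ p.2}
            (fun p => ‖g (p.1 * p.2 ^ 2)‖) := by
      funext p
      by_cases h : Squarefree p.1 ∧ 1 ≤ p.2 <;>
        simp [hΦdef, Set.indicator, h]
    rw [heq, ← summable_subtype_iff_indicator]
    have hinj : Function.Injective
        (fun q : {p : ℕ × ℕ | Squarefree p.1 ∧ 1 ≤ p.2} => q.1.1 * q.1.2 ^ 2) := by
      rintro ⟨⟨a, b⟩, hab⟩ ⟨⟨a', b'⟩, hab'⟩ h
      obtain ⟨h1, h2⟩ := sf_unique hab.1 (Nat.one_le_iff_ne_zero.mp hab.2)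
        hab'.1 (Nat.one_le_iff_ne_zero.mp hab'.2) h
      simp only [Subtype.mk_eq_mk, Prod.mk.injEq]
      exact ⟨h1, h2⟩
    exact hgsum.comp_injective hinj
  -- summability of all the restricted variants
  have hvar : ∀ (C : ℕ × ℕ → Prop) (_ : ∀ p, Decidable (C p)),
      (∀ p, C p → Squarefree p.1 ∧ 1 ≤ p.2) →
      Summable (fun p : ℕ × ℕ => if C p then g (p.1 * p.2 ^ 2) else 0) := by
    intro C _ hC
    apply Summable.of_norm
    apply Summable.of_nonneg_of_le (fun _ => norm_nonneg _) _ hΦn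
    intro p
    by_cases h : C p
    · have h' := hC p h
      simp [hΦdef, h, h']
    · simp [h]
  -- the four pieces
  set FA : ℕ × ℕ → ℂ :=
    fun p => if Squarefree p.1 ∧ Odd p.1 ∧ 1 ≤ p.2 then g (p.1 * p.2 ^ 2) else 0 with hFAdef
  set FB : ℕ × ℕ → ℂ :=
    fun p => if Squarefree p.1 ∧ Even p.1 ∧ 1 ≤ p.2 then g (p.1 * p.2 ^ 2) else 0 with hFBdef
  set FO : ℕ × ℕ → ℂ :=
    fun p => if Squarefree p.1 ∧ Odd p.1 ∧ 1 ≤ p.2 ∧ Odd p.2 then g (p.1 * p.2 ^ 2) else 0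
    with hFOdef
  set FE : ℕ × ℕ → ℂ :=
    fun p => if Squarefree p.1 ∧ Odd p.1 ∧ 1 ≤ p.2 ∧ Even p.2 then g (p.1 * p.2 ^ 2) else 0
    with hFEdef
  have hFAs : Summable FA := hvar _ _ (fun p h => ⟨h.1, h.2.2⟩)
  have hFBs : Summable FB := hvar _ _ (fun p h => ⟨h.1, h.2.2⟩)
  have hFOs : Summable FO := hvar _ _ (fun p h => ⟨h.1, h.2.2.1⟩)
  have hFEs : Summable FE := hvar _ _ (fun p h => ⟨h.1, h.2.2.1⟩)
  have hΦs : Summable Φ := hvar _ _ (fun p h => h)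
  -- reindexing lemma: sums over squarefree decompositions equal sums over ℕ
  have hreidx : ∀ (P : ℕ → Prop) (_ : DecidablePred P),
      ∑' p : ℕ × ℕ,
          (if Squarefree p.1 ∧ 1 ≤ p.2 ∧ P (p.1 * p.2 ^ 2) then g (p.1 * p.2 ^ 2) else 0)
        = ∑' n : ℕ, (if P n then g n else 0) := by
    intro P _
    set G : ℕ × ℕ → ℂ :=
      fun p => if Squarefree p.1 ∧ 1 ≤ p.2 ∧ P (p.1 * p.2 ^ 2) then g (p.1 * p.2 ^ 2) else 0
      with hGdef
    have hmem : ∀ x : support G, Squarefree x.1.1 ∧ 1 ≤ x.1.2 ∧ P (x.1.1 * x.1.2 ^ 2) := by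
      rintro ⟨p, hp⟩
      by_contra h
      exact hp (if_neg h)
    refine (tsum_eq_tsum_of_ne_zero_bij (fun x => x.1.1 * x.1.2 ^ 2) ?_ ?_ ?_).symm
    · rintro x y hxy
      obtain ⟨hx1, hx2, -⟩ := hmem x
      obtain ⟨hy1, hy2, -⟩ := hmem y
      obtain ⟨h1, h2⟩ := sf_unique hx1 (Nat.one_le_iff_ne_zero.mp hx2)
        hy1 (Nat.one_le_iff_ne_zero.mp hy2) hxy
      exact Subtype.ext (Prod.ext h1 h2)
    · intro n hn
      have hPn : P n := by
        by_contra h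
        exact hn (if_neg (fun hc => h hc))
      have hn0 : n ≠ 0 := by
        intro h0
        apply hn
        subst h0
        by_cases h : P 0 <;> simp [h, hg0]
      obtain ⟨a, b, hab, ha⟩ := Nat.sq_mul_squarefree n
      have hb : b ≠ 0 := by
        intro h0; subst h0; simp at hab; omega
      have habn : a * b ^ 2 = n := by rw [mul_comm]; exact hab
      have hcond : Squarefree a ∧ 1 ≤ b ∧ P (a * b ^ 2) := ⟨ha, by omega, habn ▸ hPn⟩
      rw [mem_support, if_pos hPn] at hn
      have hGab : G (a, b) ≠ 0 := by
        have hval : G (a, b)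
            = (if Squarefree a ∧ 1 ≤ b ∧ P (a * b ^ 2) then g (a * b ^ 2) else 0) := rfl
        rw [hval, if_pos hcond, habn]
        exact hn
      exact ⟨⟨(a, b), hGab⟩, habn⟩
    · rintro ⟨p, hp⟩
      obtain ⟨h1, h2, h3⟩ := hmem ⟨p, hp⟩
      show (if P (p.1 * p.2 ^ 2) then g (p.1 * p.2 ^ 2) else 0)
          = (if Squarefree p.1 ∧ 1 ≤ p.2 ∧ P (p.1 * p.2 ^ 2) then g (p.1 * p.2 ^ 2) else 0)
      rw [if_pos h3, if_pos (⟨h1, h2, h3⟩ : _ ∧ _ ∧ _)]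
  -- split the master sum by parity of the first coordinate
  have hAB : ∑' p, Φ p = (∑' p, FA p) + ∑' p, FB p := by
    rw [← Summable.tsum_add hFAs hFBs]
    refine tsum_congr fun p => ?_
    by_cases h : Squarefree p.1 ∧ 1 ≤ p.2
    · rcases Nat.even_or_odd p.1 with he | ho
      · simp [hΦdef, hFAdef, hFBdef, h.1, h.2, he, Nat.not_odd_iff_even.mpr he]
      · simp [hΦdef, hFAdef, hFBdef, h.1, h.2, ho, Nat.not_even_iff_odd.mpr ho]
    · have h1 : ¬(Squarefree p.1 ∧ Odd p.1 ∧ 1 ≤ p.2) := by tauto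
      have h2 : ¬(Squarefree p.1 ∧ Even p.1 ∧ 1 ≤ p.2) := by tauto
      simp [hΦdef, hFAdef, hFBdef, h, h1, h2]
  -- split FA by parity of the second coordinate
  have hOE : ∑' p, FA p = (∑' p, FO p) + ∑' p, FE p := by
    rw [← Summable.tsum_add hFOs hFEs]
    refine tsum_congr fun p => ?_
    by_cases h : Squarefree p.1 ∧ Odd p.1 ∧ 1 ≤ p.2
    · rcases Nat.even_or_odd p.2 with he | ho
      · simp [hFAdef, hFOdef, hFEdef, h.1, h.2.1, h.2.2, he, Nat.not_odd_iff_even.mpr he]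
      · simp [hFAdef, hFOdef, hFEdef, h.1, h.2.1, h.2.2, ho, Nat.not_even_iff_odd.mpr ho]
    · have h1 : ¬(Squarefree p.1 ∧ Odd p.1 ∧ 1 ≤ p.2 ∧ Odd p.2) := by tauto
      have h2 : ¬(Squarefree p.1 ∧ Odd p.1 ∧ 1 ≤ p.2 ∧ Even p.2) := by tauto
      simp [hFAdef, hFOdef, hFEdef, h, h1, h2]
  -- the master sum equals the full sum of g
  have hΦS : ∑' p, Φ p = ∑' n, g n := by
    have h1 := hreidx (fun _ => True) (fun _ => inferInstance)
    have h2 : ∑' p : ℕ × ℕ,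
        (if Squarefree p.1 ∧ 1 ≤ p.2 ∧ (fun _ : ℕ => True) (p.1 * p.2 ^ 2)
          then g (p.1 * p.2 ^ 2) else 0) = ∑' p, Φ p := by
      refine tsum_congr fun p => ?_
      by_cases h : Squarefree p.1 ∧ 1 ≤ p.2 <;> simp [hΦdef, h]
    rw [← h2, h1]
    exact tsum_congr fun n => by simp
  -- the odd pair-sum equals the sum over odd integers
  have hOsum : ∑' p, FO p = ∑' n, (if Odd n then g n else 0) := by
    have h1 := hreidx Odd (fun _ => inferInstance)
    rw [← h1]
    refine tsum_congr fun p => ?_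
    have hiff : (Squarefree p.1 ∧ Odd p.1 ∧ 1 ≤ p.2 ∧ Odd p.2)
        ↔ (Squarefree p.1 ∧ 1 ≤ p.2 ∧ Odd (p.1 * p.2 ^ 2)) := by
      rw [Nat.odd_mul, pow_two, Nat.odd_mul]
      tauto
    simp only [hFOdef]
    by_cases h : Squarefree p.1 ∧ Odd p.1 ∧ 1 ≤ p.2 ∧ Odd p.2
    · rw [if_pos h, if_pos (hiff.mp h)]
    · rw [if_neg h, if_neg (fun hc => h (hiff.mpr hc))]
  -- the even part satisfies the recursion
  have hEsum : ∑' p, FE p = c * ∑' p, FA p := by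
    have hinj : Function.Injective (fun p : ℕ × ℕ => (p.1, 2 * p.2)) := by
      rintro ⟨a, b⟩ ⟨a', b'⟩ h
      simp only [Prod.mk.injEq] at h
      exact Prod.ext h.1 (by omega)
    have hsupp : support FE ⊆ Set.range (fun p : ℕ × ℕ => (p.1, 2 * p.2)) := by
      rintro ⟨a, b⟩ hab
      have hcond : Squarefree a ∧ Odd a ∧ 1 ≤ b ∧ Even b := by
        by_contra h
        exact hab (if_neg h)
      obtain ⟨m, hm⟩ := hcond.2.2.2
      exact ⟨(a, m), by simp [Prod.ext_iff]; omega⟩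
    have key : ∑' p : ℕ × ℕ, FE (p.1, 2 * p.2) = ∑' p, FE p :=
      Function.Injective.tsum_eq hinj hsupp
    have hptwise : ∀ p : ℕ × ℕ, FE (p.1, 2 * p.2) = c * FA p := by
      rintro ⟨a, b⟩
      simp only [hFEdef, hFAdef]
      by_cases h : Squarefree a ∧ Odd a ∧ 1 ≤ b
      · have hcond : Squarefree a ∧ Odd a ∧ 1 ≤ 2 * b ∧ Even (2 * b) :=
          ⟨h.1, h.2.1, by omega, ⟨b, by omega⟩⟩
        rw [if_pos hcond, if_pos h]
        have hab0 : a * b ^ 2 ≠ 0 := by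
          have := h.1.ne_zero
          have := h.2.2
          positivity
        have : a * (2 * b) ^ 2 = 4 * (a * b ^ 2) := by ring
        rw [this, hgrec _ hab0]
      · have hcond : ¬(Squarefree a ∧ Odd a ∧ 1 ≤ 2 * b ∧ Even (2 * b)) := by
          intro hc
          exact h ⟨hc.1, hc.2.1, by omega⟩
        rw [if_neg hcond, if_neg h, mul_zero]
    rw [← key, tsum_congr hptwise, tsum_mul_left]
  -- the odd sum of g is summable
  have hOs : Summable (fun n => if Odd n then g n else 0) := by
    apply Summable.of_norm
    apply Summable.of_nonneg_of_le (fun _ => norm_nonneg _) _ hgsum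
    intro n
    by_cases h : Odd n <;> simp [h]
  -- rewrite the LHS
  have hLHS : ∑' k : ℕ, (if k = 0 then 0 else (-1 : ℂ) ^ k * f k)
      = (∑' n, g n) - 2 * ∑' n, (if Odd n then g n else 0) := by
    have h1 : ∀ k : ℕ, (if k = 0 then 0 else (-1 : ℂ) ^ k * f k)
        = g k - 2 * (if Odd k then g k else 0) := by
      intro k
      rcases eq_or_ne k 0 with rfl | hk
      · simp [hg0]
      · rw [if_neg hk, ← hgf k hk]
        rcases Nat.even_or_odd k with he | ho
        · rw [if_neg (Nat.not_odd_iff_even.mpr he), Even.neg_one_pow he]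
          ring
        · rw [if_pos ho, Odd.neg_one_pow ho]
          ring
    rw [tsum_congr h1, Summable.tsum_sub hgs (hOs.mul_left 2), tsum_mul_left]
  -- rewrite the statement's double sums as pair sums
  have hstmtA : (∑' k₁ : ℕ, ∑' k₂ : ℕ,
      if Squarefree k₁ ∧ Odd k₁ ∧ 1 ≤ k₂ then f (k₁ * k₂ ^ 2) else 0) = ∑' p, FA p := by
    have h1 : ∀ k₁ k₂ : ℕ, (if Squarefree k₁ ∧ Odd k₁ ∧ 1 ≤ k₂ then f (k₁ * k₂ ^ 2) else 0)
        = FA (k₁, k₂) := by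
      intro k₁ k₂
      simp only [hFAdef]
      by_cases h : Squarefree k₁ ∧ Odd k₁ ∧ 1 ≤ k₂
      · rw [if_pos h, if_pos h, hgf]
        have := h.1.ne_zero
        have := h.2.2
        positivity
      · rw [if_neg h, if_neg h]
    calc (∑' k₁ : ℕ, ∑' k₂ : ℕ,
          if Squarefree k₁ ∧ Odd k₁ ∧ 1 ≤ k₂ then f (k₁ * k₂ ^ 2) else 0)
        = ∑' k₁ : ℕ, ∑' k₂ : ℕ, FA (k₁, k₂) :=
          tsum_congr fun k₁ => tsum_congr fun k₂ => h1 k₁ k₂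
      _ = ∑' p, FA p := (Summable.tsum_prod' hFAs hFAs.prod_factor).symm
  have hstmtB : (∑' k₁ : ℕ, ∑' k₂ : ℕ,
      if Squarefree k₁ ∧ Even k₁ ∧ 1 ≤ k₂ then f (k₁ * k₂ ^ 2) else 0) = ∑' p, FB p := by
    have h1 : ∀ k₁ k₂ : ℕ, (if Squarefree k₁ ∧ Even k₁ ∧ 1 ≤ k₂ then f (k₁ * k₂ ^ 2) else 0)
        = FB (k₁, k₂) := by
      intro k₁ k₂
      simp only [hFBdef]
      by_cases h : Squarefree k₁ ∧ Even k₁ ∧ 1 ≤ k₂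
      · rw [if_pos h, if_pos h, hgf]
        have := h.1.ne_zero
        have := h.2.2
        positivity
      · rw [if_neg h, if_neg h]
    calc (∑' k₁ : ℕ, ∑' k₂ : ℕ,
          if Squarefree k₁ ∧ Even k₁ ∧ 1 ≤ k₂ then f (k₁ * k₂ ^ 2) else 0)
        = ∑' k₁ : ℕ, ∑' k₂ : ℕ, FB (k₁, k₂) :=
          tsum_congr fun k₁ => tsum_congr fun k₂ => h1 k₁ k₂
      _ = ∑' p, FB p := (Summable.tsum_prod' hFBs hFBs.prod_factor).symm
  -- final algebra
  rw [hLHS, hstmtA, hstmtB, two_cpow_eq, ← hcdef]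
  have e1 : ∑' n, g n = (∑' p, FA p) + ∑' p, FB p := by rw [← hΦS, hAB]
  have e2 : (∑' n, if Odd n then g n else 0) = (∑' p, FA p) - c * ∑' p, FA p := by
    rw [← hOsum]
    have := hOE
    rw [hEsum] at this
    linear_combination -this
  rw [e1, e2]
  ring
end

section
/- Let x, y, z, q ∈ ℂ with q ∉ {0, 1, −1} and x, y, z ∉ {1, −1}, and set T = (1/2)[1/((1−x)(1−y)(1−z)) + 1/((1+x)(1+y)(1+z))] and U = (1/2)[1/((1−x)(1−y)(1−z)) − 1/((1+x)(1+y)(1+z))]. Then 1 + (1 − q^{−1})(−1 + T) = 1 + (1 + q^{−1})^{−1}(−1 + Q), where Q = (1 − q^{−2})[T + (1/(q²(1 − q^{−2})))(T − (x+y+z)U + (xy+xz+yz)T − xyz·U)]. -/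
/-!
Write `A = (1-x)(1-y)(1-z)` and `B = (1+x)(1+y)(1+z)`, so that `T = (1/A + 1/B)/2` and
`U = (1/A - 1/B)/2`. In terms of `a = 1 + (xy+xz+yz)` and `b = (x+y+z) + xyz` one has `A = a - b`
and `B = a + b`, and the bracket in `Q` is `aT - bU = (A/A + B/B)/2 = 1`. Hence
`Q - 1 = (1 - q⁻²)(T - 1)`, and dividing by `1 + q⁻¹` gives `(1 - q⁻¹)(T - 1)`.
-/

variable {K : Type*} [Field K]

lemma mul_half_inv_add_sub_mul_half_inv_sub_eq_one [NeZero (2 : K)] {a b : K}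
    (hab : a - b ≠ 0) (hab' : a + b ≠ 0) :
    a * (1 / 2 * (1 / (a - b) + 1 / (a + b))) - b * (1 / 2 * (1 / (a - b) - 1 / (a + b))) = 1 := by
  field_simp
  ring

lemma elementarySymm_combination_eq_one [NeZero (2 : K)] {x y z : K}
    (hA : (1 - x) * (1 - y) * (1 - z) ≠ 0) (hB : (1 + x) * (1 + y) * (1 + z) ≠ 0) :
    let T := 1 / 2 * (1 / ((1 - x) * (1 - y) * (1 - z)) + 1 / ((1 + x) * (1 + y) * (1 + z)))
    let U := 1 / 2 * (1 / ((1 - x) * (1 - y) * (1 - z)) - 1 / ((1 + x) * (1 + y) * (1 + z)))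
    T - (x + y + z) * U + (x * y + x * z + y * z) * T - x * y * z * U = 1 := by
  intro T U
  have hA' : (1 - x) * (1 - y) * (1 - z) =
      (1 + (x * y + x * z + y * z)) - (x + y + z + x * y * z) := by ring
  have hB' : (1 + x) * (1 + y) * (1 + z) =
      (1 + (x * y + x * z + y * z)) + (x + y + z + x * y * z) := by ring
  rw [hA'] at hA
  rw [hB'] at hB
  calc T - (x + y + z) * U + (x * y + x * z + y * z) * T - x * y * z * U
      = (1 + (x * y + x * z + y * z)) * T - (x + y + z + x * y * z) * U := by ring
    _ = 1 := by
      simp only [T, U, hA', hB']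
      exact mul_half_inv_add_sub_mul_half_inv_sub_eq_one hA hB

lemma one_add_one_sub_inv_mul_eq {q : K} (hq1 : q ≠ 1) (hq1' : q ≠ -1) (T : K) :
    1 + (1 - q⁻¹) * (-1 + T) =
      1 + (1 + q⁻¹)⁻¹ * (-1 + (1 - q⁻¹ ^ 2) * (T + 1 / (q ^ 2 * (1 - q⁻¹ ^ 2)))) := by
  have hplus : 1 + q⁻¹ ≠ 0 := fun h => hq1' (by simpa using congrArg Inv.inv (eq_neg_of_add_eq_zero_right h))
  have hminus : 1 - q⁻¹ ≠ 0 := sub_ne_zero.mpr (by simpa [eq_comm] using hq1)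
  have hsq : 1 - q⁻¹ ^ 2 ≠ 0 := by
    rw [show 1 - q⁻¹ ^ 2 = (1 - q⁻¹) * (1 + q⁻¹) by ring]
    exact mul_ne_zero hminus hplus
  have hQ : (1 - q⁻¹ ^ 2) * (T + 1 / (q ^ 2 * (1 - q⁻¹ ^ 2))) = (1 - q⁻¹ ^ 2) * T + q⁻¹ ^ 2 := by
    rw [mul_add, mul_one_div, div_mul_cancel_right₀ hsq, inv_pow]
  rw [hQ, show -1 + ((1 - q⁻¹ ^ 2) * T + q⁻¹ ^ 2) = (1 + q⁻¹) * ((1 - q⁻¹) * (-1 + T)) by ring,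
    inv_mul_cancel_left₀ hplus]

theorem euler_factor_identity_general (x y z q : ℂ)
    (hq1 : q ≠ 1) (hq1' : q ≠ -1)
    (hx1 : x ≠ 1) (hx1' : x ≠ -1) (hy1 : y ≠ 1) (hy1' : y ≠ -1)
    (hz1 : z ≠ 1) (hz1' : z ≠ -1) :
    let T : ℂ := (1 / 2) * (1 / ((1 - x) * (1 - y) * (1 - z)) +
      1 / ((1 + x) * (1 + y) * (1 + z)))
    let U : ℂ := (1 / 2) * (1 / ((1 - x) * (1 - y) * (1 - z)) -
      1 / ((1 + x) * (1 + y) * (1 + z)))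
    let Q : ℂ := (1 - q⁻¹ ^ 2) * (T + (1 / (q ^ 2 * (1 - q⁻¹ ^ 2))) *
      (T - (x + y + z) * U + (x * y + x * z + y * z) * T - x * y * z * U))
    1 + (1 - q⁻¹) * (-1 + T) = 1 + (1 + q⁻¹)⁻¹ * (-1 + Q) := by
  intro T U Q
  have one_sub_ne_zero {w : ℂ} (hw : w ≠ 1) : 1 - w ≠ 0 := sub_ne_zero.mpr hw.symm
  have one_add_ne_zero {w : ℂ} (hw : w ≠ -1) : 1 + w ≠ 0 :=
    fun h => hw (by simpa using eq_neg_of_add_eq_zero_right h)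
  have hA : (1 - x) * (1 - y) * (1 - z) ≠ 0 := by
    simp only [ne_eq, mul_eq_zero, not_or]
    exact ⟨⟨one_sub_ne_zero hx1, one_sub_ne_zero hy1⟩, one_sub_ne_zero hz1⟩
  have hB : (1 + x) * (1 + y) * (1 + z) ≠ 0 := by
    simp only [ne_eq, mul_eq_zero, not_or]
    exact ⟨⟨one_add_ne_zero hx1', one_add_ne_zero hy1'⟩, one_add_ne_zero hz1'⟩
  have hbracket : T - (x + y + z) * U + (x * y + x * z + y * z) * T - x * y * z * U = 1 :=
    elementarySymm_combination_eq_one hA hB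
  simp only [Q, hbracket, mul_one]
  exact one_add_one_sub_inv_mul_eq hq1 hq1' T

/-- The Euler-factor identity at primes `p ∤ al` verified in Section 6.1. -/
theorem euler_factor_identity (x y z q : ℂ)
    (hq0 : q ≠ 0) (hq1 : q ≠ 1) (hq1' : q ≠ -1)
    (hx1 : x ≠ 1) (hx1' : x ≠ -1) (hy1 : y ≠ 1) (hy1' : y ≠ -1)
    (hz1 : z ≠ 1) (hz1' : z ≠ -1) :
    let T : ℂ := (1 / 2) * (1 / ((1 - x) * (1 - y) * (1 - z)) +
      1 / ((1 + x) * (1 + y) * (1 + z)))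
    let U : ℂ := (1 / 2) * (1 / ((1 - x) * (1 - y) * (1 - z)) -
      1 / ((1 + x) * (1 + y) * (1 + z)))
    let Q : ℂ := (1 - q⁻¹ ^ 2) * (T + (1 / (q ^ 2 * (1 - q⁻¹ ^ 2))) *
      (T - (x + y + z) * U + (x * y + x * z + y * z) * T - x * y * z * U))
    1 + (1 - q⁻¹) * (-1 + T) = 1 + (1 + q⁻¹)⁻¹ * (-1 + Q) :=
  euler_factor_identity_general x y z q hq1 hq1' hx1 hx1' hy1 hy1' hz1 hz1'
end

section
/- Let x, y, z, q ∈ ℂ with x ≠ 0, q ∉ {0, 1, −1}, and set w = 1/(q x²). Assume xw, y, z ∉ {1, −1}, w ≠ q, and w ≠ q². Define V = (1/2)[1/((1−xw)(1−y)(1−z)) + 1/((1+xw)(1+y)(1+z))] and W = (1/2)[1/((1−xw)(1−y)(1−z)) − 1/((1+xw)(1+y)(1+z))]. Then (1 − q^{−1})(1 − w/q)^{−1} = (1 − q^{−2})(1 − w q^{−2})^{−1} · [1 + (1 + q^{−1})^{−1}(−1 + V − (x+y+z)W + (xy+xz+yz)V − xyz·W)]. -/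
/-!
Pairing `V` and `W` with the elementary symmetric functions of `x, y, z` turns the bracket into
`½[(1 - x)/(1 - u) + (1 + x)/(1 + u)] - 1` with `u = x w`, the factors in `y` and `z` cancelling.
Since `x u = q⁻¹` and `u² = w / q`, this is `(1 - q⁻¹)/(1 - w/q) - 1`, and what remains is an
identity of rational functions in `q` and `w`.
-/

section
variable {K : Type*} [Field K]

theorem neg_one_add_symm_combination_eq_half_sum (a b x y z : K) :
    -1 + 1 / 2 * (a + b) - (x + y + z) * (1 / 2 * (a - b)) +
        (x * y + x * z + y * z) * (1 / 2 * (a + b)) - x * y * z * (1 / 2 * (a - b)) =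
      1 / 2 * (a * ((1 - x) * (1 - y) * (1 - z)) + b * ((1 + x) * (1 + y) * (1 + z))) - 1 := by
  ring

theorem half_sum_inv_prod_mul_prod [NeZero (2 : K)] {u y z : K} (x : K) (hu : u ≠ 1)
    (hu' : u ≠ -1) (hy : y ≠ 1) (hy' : y ≠ -1) (hz : z ≠ 1) (hz' : z ≠ -1) :
    1 / 2 * (1 / ((1 - u) * (1 - y) * (1 - z)) * ((1 - x) * (1 - y) * (1 - z)) +
        1 / ((1 + u) * (1 + y) * (1 + z)) * ((1 + x) * (1 + y) * (1 + z))) =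
      (1 - x * u) / (1 - u ^ 2) := by
  have h1 : 1 - u ≠ 0 := sub_ne_zero.2 hu.symm
  have h2 : 1 + u ≠ 0 := fun h => hu' (eq_neg_of_add_eq_zero_right h)
  have h3 : 1 - y ≠ 0 := sub_ne_zero.2 hy.symm
  have h4 : 1 + y ≠ 0 := fun h => hy' (eq_neg_of_add_eq_zero_right h)
  have h5 : 1 - z ≠ 0 := sub_ne_zero.2 hz.symm
  have h6 : 1 + z ≠ 0 := fun h => hz' (eq_neg_of_add_eq_zero_right h)
  have h7 : 1 - u ^ 2 ≠ 0 := by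
    rw [show 1 - u ^ 2 = (1 - u) * (1 + u) by ring]
    exact mul_ne_zero h1 h2
  field_simp
  ring

theorem euler_factor_identity_reduced {q w : K} (hq0 : q ≠ 0) (hq : q ≠ -1) (hwq : w ≠ q)
    (hwq2 : w ≠ q ^ 2) :
    (1 - q⁻¹) * (1 - w / q)⁻¹ =
      (1 - q⁻¹ ^ 2) * (1 - w * q⁻¹ ^ 2)⁻¹ *
        (1 + (1 + q⁻¹)⁻¹ * ((1 - q⁻¹) / (1 - w / q) - 1)) := by
  have h1 : q - w ≠ 0 := sub_ne_zero.2 hwq.symm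
  have h2 : q ^ 2 - w ≠ 0 := sub_ne_zero.2 hwq2.symm
  have h3 : q + 1 ≠ 0 := fun h => hq (eq_neg_of_add_eq_zero_left h)
  field_simp
  ring

end

theorem euler_factor_identity_p_dvd_a_general (x y z q : ℂ) (hx0 : x ≠ 0)
    (hq0 : q ≠ 0) (hq1' : q ≠ -1) :
    let w : ℂ := 1 / (q * x ^ 2)
    ∀ (_ : x * w ≠ 1) (_ : x * w ≠ -1) (_ : y ≠ 1) (_ : y ≠ -1)
      (_ : z ≠ 1) (_ : z ≠ -1) (_ : w ≠ q) (_ : w ≠ q ^ 2),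
    let V : ℂ := (1 / 2) * (1 / ((1 - x * w) * (1 - y) * (1 - z)) +
      1 / ((1 + x * w) * (1 + y) * (1 + z)))
    let W : ℂ := (1 / 2) * (1 / ((1 - x * w) * (1 - y) * (1 - z)) -
      1 / ((1 + x * w) * (1 + y) * (1 + z)))
    (1 - q⁻¹) * (1 - w / q)⁻¹ =
      (1 - q⁻¹ ^ 2) * (1 - w * q⁻¹ ^ 2)⁻¹ *
        (1 + (1 + q⁻¹)⁻¹ *
          (-1 + V - (x + y + z) * W + (x * y + x * z + y * z) * V - x * y * z * W)) := by
  intro w hu hu' hy hy' hz hz' hwq hwq2 V W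
  have hxu : x * (x * w) = q⁻¹ := by simp only [w]; field_simp
  have hu2 : (x * w) ^ 2 = w / q := by simp only [w]; field_simp
  have hbracket : -1 + V - (x + y + z) * W + (x * y + x * z + y * z) * V - x * y * z * W =
      (1 - q⁻¹) / (1 - w / q) - 1 := by
    rw [neg_one_add_symm_combination_eq_half_sum, half_sum_inv_prod_mul_prod x hu hu' hy hy' hz hz',
      hxu, hu2]
  rw [hbracket]
  exact euler_factor_identity_reduced hq0 hq1' hwq hwq2

/-- The Euler-factor identity at primes `p ∣ a` verified in Section 6.3. -/
theorem euler_factor_identity_p_dvd_a (x y z q : ℂ) (hx0 : x ≠ 0)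
    (hq0 : q ≠ 0) (hq1 : q ≠ 1) (hq1' : q ≠ -1) :
    let w : ℂ := 1 / (q * x ^ 2)
    ∀ (_ : x * w ≠ 1) (_ : x * w ≠ -1) (_ : y ≠ 1) (_ : y ≠ -1)
      (_ : z ≠ 1) (_ : z ≠ -1) (_ : w ≠ q) (_ : w ≠ q ^ 2),
    let V : ℂ := (1 / 2) * (1 / ((1 - x * w) * (1 - y) * (1 - z)) +
      1 / ((1 + x * w) * (1 + y) * (1 + z)))
    let W : ℂ := (1 / 2) * (1 / ((1 - x * w) * (1 - y) * (1 - z)) -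
      1 / ((1 + x * w) * (1 + y) * (1 + z)))
    (1 - q⁻¹) * (1 - w / q)⁻¹ =
      (1 - q⁻¹ ^ 2) * (1 - w * q⁻¹ ^ 2)⁻¹ *
        (1 + (1 + q⁻¹)⁻¹ *
          (-1 + V - (x + y + z) * W + (x * y + x * z + y * z) * V - x * y * z * W)) :=
  euler_factor_identity_p_dvd_a_general x y z q hx0 hq0 hq1'
end

section
/- There exist k ∈ ℕ and C > 0 such that for every real X ≥ 2 and every infinitely differentiable function F : ℝ → ℝ whose support is contained in [X/2, 3X] and which satisfies |F^{(j)}(x)| ≤ X^{−j} for all x ∈ ℝ and all 0 ≤ j ≤ k, one has | ∑_{d ≥ 1 squarefree} F(d) − (6/π²) ∫_ℝ F(x) dx | ≤ C X^{1/2}. -/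
open MeasureTheory

section Aux

open MeasureTheory Function intervalIntegral

/-- Riemann sum estimate (order-0 Euler–Maclaurin). -/
theorem riemann_sum_est (g g' : ℝ → ℝ) (hd : ∀ x, HasDerivAt g (g' x) x)
    (hg' : Continuous g') (t : ℝ) (ht : 0 < t) (c d : ℝ) (hc : 0 < c)
    (hsupp : Function.support g ⊆ Set.Icc c d) (M : ℕ) (hM : d < t * (M + 1))
    (hgint : Integrable g) (hg'int : Integrable fun x => |g' x|) :
    |(∑ m ∈ Finset.range (M + 1), g (t * m)) - (1 / t) * ∫ x, g x| ≤ ∫ x, |g' x| := by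
  have hgc : Continuous g := by
    have : Differentiable ℝ g := fun x => (hd x).differentiableAt
    exact this.continuous
  have hg'abs : Continuous fun x => |g' x| := hg'.abs
  -- per-interval estimate
  have key : ∀ m : ℕ, |t * g (t * m) - ∫ x in (t * m : ℝ)..(t * (m + 1)), g x| ≤
      t * ∫ x in (t * m : ℝ)..(t * (m + 1)), |g' x| := by
    intro m
    set a : ℝ := t * m
    set b : ℝ := t * (m + 1)
    have hab : a ≤ b := by
      have : (m : ℝ) ≤ (m : ℝ) + 1 := by linarith
      exact mul_le_mul_of_nonneg_left this ht.le
    have hconst : t * g a = ∫ _x in a..b, g a := by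
      rw [intervalIntegral.integral_const, smul_eq_mul]
      have : b - a = t := by simp [a, b]; ring
      rw [this]
    have hsub : t * g a - ∫ x in a..b, g x = ∫ x in a..b, (g a - g x) := by
      rw [hconst, ← intervalIntegral.integral_sub intervalIntegrable_const
        (hgc.intervalIntegrable _ _)]
    rw [hsub]
    have hb : ∀ x ∈ Set.uIoc a b, ‖g a - g x‖ ≤ ∫ y in a..b, |g' y| := by
      intro x hx
      rw [Set.uIoc_of_le hab] at hx
      have hax : a ≤ x := hx.1.le
      have hxb : x ≤ b := hx.2
      have hftc : ∫ y in a..x, g' y = g x - g a := by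
        apply intervalIntegral.integral_eq_sub_of_hasDerivAt
        · intro y _; exact hd y
        · exact hg'.intervalIntegrable _ _
      have h1 : ‖g a - g x‖ = ‖∫ y in a..x, g' y‖ := by
        rw [hftc]; rw [norm_sub_rev]
      rw [h1]
      calc ‖∫ y in a..x, g' y‖ ≤ ∫ y in a..x, ‖g' y‖ :=
            intervalIntegral.norm_integral_le_integral_norm hax
        _ = ∫ y in a..x, |g' y| := by simp [Real.norm_eq_abs]
        _ ≤ ∫ y in a..b, |g' y| := by
            apply intervalIntegral.integral_mono_interval le_rfl hax hxb
            · filter_upwards with y using abs_nonneg _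
            · exact hg'abs.intervalIntegrable _ _
    have := intervalIntegral.norm_integral_le_of_norm_le_const hb
    rw [Real.norm_eq_abs] at this
    calc |∫ x in a..b, (g a - g x)| ≤ (∫ y in a..b, |g' y|) * |b - a| := this
      _ = t * ∫ y in a..b, |g' y| := by
          have : |b - a| = t := by
            have : b - a = t := by simp [a, b]; ring
            rw [this, abs_of_pos ht]
          rw [this, mul_comm]
  -- sum the intervals
  set T : ℝ := t * (M + 1)
  have hadj : ∀ (f : ℝ → ℝ), Continuous f →
      (∑ m ∈ Finset.range (M + 1), ∫ x in (t * m : ℝ)..(t * (m + 1)), f x) =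
        ∫ x in (0 : ℝ)..T, f x := by
    intro f hf
    have := intervalIntegral.sum_integral_adjacent_intervals (a := fun k : ℕ => t * k)
      (μ := volume) (n := M + 1) (f := f) (fun k _ => hf.intervalIntegrable _ _)
    simpa [T] using this
  have hsum1 : |t * (∑ m ∈ Finset.range (M + 1), g (t * m)) - ∫ x in (0:ℝ)..T, g x| ≤
      t * ∫ x in (0:ℝ)..T, |g' x| := by
    rw [← hadj g hgc, ← hadj (fun x => |g' x|) hg'abs, Finset.mul_sum, ← Finset.sum_sub_distrib,
      Finset.mul_sum]
    refine (Finset.abs_sum_le_sum_abs _ _).trans (Finset.sum_le_sum fun m _ => key m)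
  -- replace interval integrals by full integrals
  have hTpos : 0 ≤ T := by positivity
  have hgeq : ∫ x in (0:ℝ)..T, g x = ∫ x, g x := by
    apply intervalIntegral.integral_eq_integral_of_support_subset
    intro x hx
    have := hsupp hx
    exact ⟨lt_of_lt_of_le hc this.1, this.2.trans hM.le⟩
  have hg'le : ∫ x in (0:ℝ)..T, |g' x| ≤ ∫ x, |g' x| := by
    rw [intervalIntegral.integral_of_le hTpos]
    apply setIntegral_le_integral hg'int
    filter_upwards with y using abs_nonneg _
  have h2 : |t * (∑ m ∈ Finset.range (M + 1), g (t * m)) - ∫ x, g x| ≤ t * ∫ x, |g' x| := by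
    rw [← hgeq]
    exact hsum1.trans (by nlinarith [hg'le])
  have h3 : (∑ m ∈ Finset.range (M + 1), g (t * m)) - (1 / t) * ∫ x, g x =
      (1 / t) * (t * (∑ m ∈ Finset.range (M + 1), g (t * m)) - ∫ x, g x) := by
    field_simp
  rw [h3, abs_mul, abs_of_pos (by positivity : (0:ℝ) < 1 / t)]
  calc (1 / t) * |t * (∑ m ∈ Finset.range (M + 1), g (t * m)) - ∫ x, g x| ≤
      (1 / t) * (t * ∫ x, |g' x|) := by
        exact mul_le_mul_of_nonneg_left h2 (by positivity)
    _ = ∫ x, |g' x| := by field_simp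

end Aux

section Aux2

open MeasureTheory Function ArithmeticFunction Finset

lemma sq_dvd_iff_dvd {a b s : ℕ} (hs : Squarefree s) (hb : b ≠ 0) (ha : a ≠ 0) :
    a ^ 2 ∣ b ^ 2 * s ↔ a ∣ b := by
  have hs0 : s ≠ 0 := hs.ne_zero
  constructor
  · intro h
    rw [← Nat.factorization_le_iff_dvd ha hb]
    rw [← Nat.factorization_le_iff_dvd (pow_ne_zero 2 ha) (by positivity)] at h
    rw [Finsupp.le_def] at h ⊢
    intro p
    have := h p
    rw [Nat.factorization_pow, Nat.factorization_mul (pow_ne_zero 2 hb) hs0,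
      Nat.factorization_pow] at this
    simp only [Finsupp.coe_add, Finsupp.coe_smul, Pi.add_apply, Pi.smul_apply,
      smul_eq_mul] at this
    have hsp : s.factorization p ≤ 1 := (Nat.squarefree_iff_factorization_le_one hs0).mp hs p
    omega
  · intro h
    exact dvd_mul_of_dvd_left (pow_dvd_pow_of_dvd h 2) s

lemma moebius_sum_sq (n A : ℕ) (hn : n ≠ 0) (hA : Nat.sqrt n ≤ A) :
    ∑ a ∈ (Finset.Icc 1 A).filter (fun a => a ^ 2 ∣ n), ((moebius a : ℤ) : ℝ) =
      if Squarefree n then 1 else 0 := by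
  obtain ⟨s, b, hs0, hb0, hmul, hsf⟩ := Nat.sq_mul_squarefree_of_pos (Nat.pos_of_ne_zero hn)
  have hbA : b ≤ A := by
    refine le_trans (Nat.le_sqrt.mpr ?_) hA
    calc b * b = b ^ 2 * 1 := by ring
      _ ≤ b ^ 2 * s := by exact Nat.mul_le_mul_left _ hs0
      _ = n := hmul
  have hset : (Finset.Icc 1 A).filter (fun a => a ^ 2 ∣ n) = b.divisors := by
    ext a
    simp only [Finset.mem_filter, Finset.mem_Icc, Nat.mem_divisors]
    constructor
    · rintro ⟨⟨h1, _⟩, h2⟩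
      rw [← hmul] at h2
      exact ⟨(sq_dvd_iff_dvd hsf hb0.ne' (by omega)).mp h2, hb0.ne'⟩
    · rintro ⟨h1, -⟩
      have ha0 : a ≠ 0 := fun h => by simp [h] at h1; omega
      refine ⟨⟨by omega, le_trans (Nat.le_of_dvd hb0 h1) hbA⟩, ?_⟩
      rw [← hmul]
      exact (sq_dvd_iff_dvd hsf hb0.ne' ha0).mpr h1
  rw [hset]
  have hz : ∑ a ∈ b.divisors, moebius a = if b = 1 then 1 else 0 := by
    rw [← coe_mul_zeta_apply, moebius_mul_coe_zeta, one_apply]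
  have hiff : b = 1 ↔ Squarefree n := by
    constructor
    · intro h; rw [← hmul, h]; simpa using hsf
    · intro h
      have hb2 : Squarefree (b ^ 2) := h.squarefree_of_dvd ⟨s, hmul.symm⟩
      have := hb2 b (by rw [pow_two])
      simpa [Nat.isUnit_iff] using this
  calc ∑ a ∈ b.divisors, ((moebius a : ℤ) : ℝ)
      = ((∑ a ∈ b.divisors, moebius a : ℤ) : ℝ) := by push_cast; rfl
    _ = ((if b = 1 then 1 else 0 : ℤ) : ℝ) := by rw [hz]
    _ = if Squarefree n then 1 else 0 := by simp only [← hiff]; split <;> norm_num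

lemma moebius_summable : Summable (fun a : ℕ => ((moebius a : ℤ) : ℝ) / (a : ℝ) ^ 2) := by
  apply Summable.of_abs
  apply Summable.of_nonneg_of_le (fun a => abs_nonneg _) (fun a => ?_)
    (Real.summable_one_div_nat_pow.mpr one_lt_two)
  rcases Nat.eq_zero_or_pos a with h | h
  · simp [h]
  · rw [abs_div, abs_of_nonneg (by positivity : (0:ℝ) ≤ (a:ℝ)^2), div_le_div_iff_of_pos_right
      (by positivity), ← Int.cast_abs]
    exact_mod_cast abs_moebius_le_one
  
lemma moebius_tsum : ∑' a : ℕ, ((moebius a : ℤ) : ℝ) / (a : ℝ) ^ 2 = 6 / Real.pi ^ 2 := by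
  have hL : LSeries (fun n => ((moebius n : ℤ) : ℂ)) 2 = 6 / (Real.pi : ℂ) ^ 2 := by
    have h1 := LSeries_zeta_mul_Lseries_moebius (s := 2) (by norm_num)
    rw [LSeries_zeta_eq, LSeries_one_eq_riemannZeta (by norm_num), riemannZeta_two] at h1
    have hpi : (Real.pi : ℂ) ≠ 0 := by
      simp [Complex.ofReal_ne_zero, Real.pi_ne_zero]
    field_simp [hpi] at h1 ⊢
    linear_combination h1
  have hterm : ∀ n : ℕ, LSeries.term (fun n => ((moebius n : ℤ) : ℂ)) 2 n =
      ((((moebius n : ℤ) : ℝ) / (n : ℝ) ^ 2 : ℝ) : ℂ) := by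
    intro n
    rcases Nat.eq_zero_or_pos n with h | h
    · simp [h, LSeries.term]
    · rw [LSeries.term_of_ne_zero (by omega)]
      have : (n : ℂ) ^ (2 : ℂ) = (n : ℂ) ^ (2 : ℕ) := by
        rw [show (2:ℂ) = ((2:ℕ):ℂ) by norm_num, Complex.cpow_natCast]
      rw [this]
      push_cast
      ring
  have := Complex.ofReal_tsum (L := SummationFilter.unconditional ℕ) (fun a : ℕ => ((moebius a : ℤ) : ℝ) / (a : ℝ) ^ 2)
  rw [show (∑' a : ℕ, (((((moebius a : ℤ) : ℝ) / (a : ℝ) ^ 2 : ℝ)) : ℂ)) =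
      LSeries (fun n => ((moebius n : ℤ) : ℂ)) 2 from (tsum_congr hterm).symm, hL] at this
  have h6 : ((6 / Real.pi ^ 2 : ℝ) : ℂ) = 6 / (Real.pi : ℂ) ^ 2 := by push_cast; ring
  exact Complex.ofReal_injective (by rw [this, h6])

end Aux2

section Main
open MeasureTheory Function ArithmeticFunction Finset

set_option maxHeartbeats 2000000 in
/-- Smoothed count of squarefree integers with square-root error term. -/
theorem smoothed_squarefree_count :
    ∃ (k : ℕ) (C : ℝ), 0 < C ∧
      ∀ X : ℝ, 2 ≤ X → ∀ F : ℝ → ℝ, ContDiff ℝ (⊤ : ℕ∞) F →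
        (Function.support F ⊆ Set.Icc (X / 2) (3 * X)) →
        (∀ x : ℝ, ∀ j : ℕ, j ≤ k → |iteratedDeriv j F x| ≤ X ^ (-(j : ℝ))) →
        |(∑' d : ℕ, if Squarefree d then F d else 0) -
            (6 / Real.pi ^ 2) * ∫ x : ℝ, F x| ≤ C * X ^ ((1 : ℝ) / 2) := by
  refine ⟨1, 20, by norm_num, ?_⟩
  intro X hX F hF hsupp hbound
  have hX0 : (0:ℝ) < X := by linarith
  -- basic facts about F
  have hFc : Continuous F := hF.continuous
  have hFz : ∀ x : ℝ, x ∉ Set.Icc (X/2) (3*X) → F x = 0 := by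
    intro x hx
    by_contra h
    exact hx (hsupp h)
  have hcs : HasCompactSupport F := HasCompactSupport.intro isCompact_Icc hFz
  have hFint : Integrable F := hFc.integrable_of_hasCompactSupport hcs
  have hF' : Continuous (deriv F) := hF.continuous_deriv (by simp)
  have hcs' : HasCompactSupport (deriv F) := hcs.deriv
  have hF'int : Integrable (fun x => |deriv F x|) :=
    (hF'.abs).integrable_of_hasCompactSupport (hcs'.comp_left (g := fun y : ℝ => |y|) abs_zero)
  have hF1 : ∀ x, |F x| ≤ Set.indicator (Set.Icc (X/2) (3*X)) (fun _ => (1:ℝ)) x := by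
    intro x
    by_cases hx : x ∈ Set.Icc (X/2) (3*X)
    · rw [Set.indicator_of_mem hx]
      have := hbound x 0 (by norm_num)
      simpa using this
    · rw [Set.indicator_of_notMem hx, hFz x hx]; simp
  have hD1 : ∀ x, |deriv F x| ≤ Set.indicator (Set.Icc (X/2) (3*X)) (fun _ => X⁻¹) x := by
    intro x
    by_cases hx : x ∈ Set.Icc (X/2) (3*X)
    · rw [Set.indicator_of_mem hx]
      have := hbound x 1 le_rfl
      rw [iteratedDeriv_one] at this
      calc |deriv F x| ≤ X ^ (-(1:ℕ):ℝ) := this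
        _ = X⁻¹ := by
            rw [show (-(1:ℕ):ℝ) = (-1 : ℝ) by norm_num, Real.rpow_neg_one]
    · have : deriv F x = 0 := by
        have hts : tsupport F ⊆ Set.Icc (X/2) (3*X) :=
          closure_minimal hsupp isClosed_Icc
        by_contra h
        exact hx (hts (support_deriv_subset (by simpa using h)))
      rw [Set.indicator_of_notMem hx, this]; simp
  have hIicc : ∀ c : ℝ, 0 ≤ c → ∫ x : ℝ, Set.indicator (Set.Icc (X/2) (3*X)) (fun _ => c) x
      = c * (5 * X / 2) := by
    intro c hc
    rw [integral_indicator_const _ measurableSet_Icc, Real.volume_real_Icc, smul_eq_mul,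
      max_eq_left (by linarith), mul_comm]
    ring_nf
  have hintind : ∀ c : ℝ, Integrable (Set.indicator (Set.Icc (X/2) (3*X)) (fun _ => c)) := by
    intro c
    rw [integrable_indicator_iff measurableSet_Icc]
    exact integrableOn_const (by rw [Real.volume_Icc]; exact ENNReal.ofReal_ne_top)
  have hD : ∫ x, |deriv F x| ≤ 5 / 2 := by
    calc ∫ x, |deriv F x| ≤ ∫ x, Set.indicator (Set.Icc (X/2) (3*X)) (fun _ => X⁻¹) x :=
          integral_mono hF'int (hintind _) (fun x => by simpa using hD1 x)
      _ = X⁻¹ * (5 * X / 2) := hIicc _ (by positivity)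
      _ = 5 / 2 := by field_simp
  have hIF : |∫ x, F x| ≤ 5 * X / 2 := by
    have h1 : |∫ x, F x| ≤ ∫ x, |F x| := by
      simpa [Real.norm_eq_abs] using
        MeasureTheory.norm_integral_le_integral_norm (f := F)
    have h2 : ∫ x, |F x| ≤ ∫ x, Set.indicator (Set.Icc (X/2) (3*X)) (fun _ => (1:ℝ)) x :=
      integral_mono hFint.abs (hintind _) (fun x => by simpa using hF1 x)
    have h3 := hIicc 1 (by norm_num)
    linarith
  -- discrete setup
  set N := Nat.floor (3*X) with hNdef
  set A := Nat.sqrt N with hAdef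
  have hN3X : (N:ℝ) ≤ 3*X := Nat.floor_le (by positivity)
  have hN3X' : 3*X < (N:ℝ) + 1 := Nat.lt_floor_add_one _
  have hN6 : 6 ≤ N := Nat.le_floor (by push_cast; linarith)
  have hA2 : 2 ≤ A := by
    rw [hAdef]
    exact Nat.le_sqrt.mpr (by omega)
  -- Step 1 : reduce tsum to finite sum
  have hstep1 : (∑' d : ℕ, if Squarefree d then F d else 0) =
      ∑ d ∈ Finset.range (N+1), (if Squarefree d then F d else 0) := by
    apply tsum_eq_sum
    intro d hd
    have hd' : N + 1 ≤ d := by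
      rw [Finset.mem_range, not_lt] at hd; exact hd
    have h3 : 3*X < (d:ℝ) := by
      calc 3*X < (N:ℝ)+1 := hN3X'
        _ ≤ d := by exact_mod_cast hd'
    have : F d = 0 := hFz _ (fun hmem => absurd hmem.2 (not_le.mpr h3))
    simp [this]
  -- Step 2 : drop d = 0
  have hstep2 : ∑ d ∈ Finset.range (N+1), (if Squarefree d then F d else 0) =
      ∑ d ∈ Finset.Icc 1 N, (if Squarefree d then F d else 0) := by
    symm
    apply Finset.sum_subset
    · intro x hx
      rw [Finset.mem_Icc] at hx
      rw [Finset.mem_range]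
      omega
    · intro x hx hx'
      rw [Finset.mem_range] at hx
      rw [Finset.mem_Icc] at hx'
      have : x = 0 := by omega
      subst this
      simp [not_squarefree_zero]
  -- Step 3 : Moebius expansion of the squarefree indicator
  have hstep3 : ∀ d ∈ Finset.Icc 1 N, (if Squarefree d then F d else 0) =
      ∑ a ∈ Finset.Icc 1 A, (if a^2 ∣ d then ((moebius a : ℤ):ℝ) * F d else 0) := by
    intro d hd
    rw [Finset.mem_Icc] at hd
    have h1 := moebius_sum_sq d A (by omega) (Nat.sqrt_le_sqrt hd.2)
    calc (if Squarefree d then F (d:ℕ) else 0)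
        = (if Squarefree d then (1:ℝ) else 0) * F d := by split <;> simp
      _ = (∑ a ∈ (Finset.Icc 1 A).filter (fun a => a^2 ∣ d), ((moebius a : ℤ):ℝ)) * F d := by
          rw [h1]
      _ = ∑ a ∈ Finset.Icc 1 A, (if a^2 ∣ d then ((moebius a : ℤ):ℝ) * F d else 0) := by
          rw [Finset.sum_filter, Finset.sum_mul]
          exact Finset.sum_congr rfl (fun a _ => by split <;> simp
)
  -- Step 4 : exchange summation and reindex d = a^2 * m
  set T := ∑ a ∈ Finset.Icc 1 A, ((moebius a : ℤ):ℝ) *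
      (∑ m ∈ Finset.Icc 1 (N / a^2), F ((a^2*m : ℕ))) with hTdef
  have hstep4 : ∑ d ∈ Finset.Icc 1 N, (if Squarefree d then F d else 0) = T := by
    rw [Finset.sum_congr rfl hstep3, Finset.sum_comm, hTdef]
    apply Finset.sum_congr rfl
    intro a ha
    rw [Finset.mem_Icc] at ha
    have ha1 : 1 ≤ a := ha.1
    have hpos : 0 < a^2 := by positivity
    rw [Finset.mul_sum, ← Finset.sum_filter]
    apply Finset.sum_nbij' (i := fun d => d / a^2) (j := fun m => a^2 * m)
    · intro d hd
      rw [Finset.mem_filter, Finset.mem_Icc] at hd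
      obtain ⟨⟨hd1, hd2⟩, hdvd⟩ := hd
      rw [Finset.mem_Icc]
      constructor
      · have : a^2 ≤ d := Nat.le_of_dvd (by omega) hdvd
        exact Nat.one_le_div_iff hpos |>.mpr this
      · exact Nat.div_le_div_right hd2
    · intro m hm
      rw [Finset.mem_Icc] at hm
      rw [Finset.mem_filter, Finset.mem_Icc]
      refine ⟨⟨Nat.mul_pos hpos hm.1, ?_⟩, ⟨m, rfl⟩⟩
      calc a^2 * m = m * a^2 := by ring
        _ ≤ N := (Nat.le_div_iff_mul_le hpos).mp hm.2
    · intro d hd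
      rw [Finset.mem_filter] at hd
      exact Nat.mul_div_cancel' hd.2
    · intro m _
      exact Nat.mul_div_cancel_left m hpos
    · intro d hd
      rw [Finset.mem_filter] at hd
      rw [Nat.mul_div_cancel' hd.2]
  -- Step 5 : Riemann-sum estimate for each a
  have hstep5 : ∀ a ∈ Finset.Icc 1 A,
      |(∑ m ∈ Finset.Icc 1 (N / a^2), F ((a^2*m : ℕ))) - (1/((a:ℝ)^2)) * ∫ x, F x| ≤ 5/2 := by
    intro a ha
    rw [Finset.mem_Icc] at ha
    have ha1 : 1 ≤ a := ha.1
    have ha1' : (1:ℝ) ≤ (a:ℝ) := by exact_mod_cast ha1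
    have hpos : (0:ℝ) < (a:ℝ)^2 := by positivity
    set M := N / a^2 with hMdef
    have hder : ∀ x, HasDerivAt F (deriv F x) x :=
      fun x => (hF.differentiable (by simp) x).hasDerivAt
    have hMlt : 3*X < (a:ℝ)^2 * (M+1) := by
      have h1 : N < a^2 * (M+1) := by
        have h2 := Nat.div_add_mod N (a^2)
        have h3 : N % (a^2) < a^2 := Nat.mod_lt _ (by positivity)
        calc N = a^2 * M + N % a^2 := by rw [hMdef]; omega
          _ < a^2 * (M+1) := by
              have : a^2*(M+1) = a^2*M + a^2 := by ring
              omega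
      have h4 : (N:ℝ) + 1 ≤ (a:ℝ)^2 * ((M:ℝ)+1) := by
        have : (N:ℕ) + 1 ≤ a^2 * (M+1) := h1
        calc (N:ℝ) + 1 = ((N + 1 : ℕ) : ℝ) := by push_cast; ring
          _ ≤ ((a^2 * (M+1) : ℕ) : ℝ) := by exact_mod_cast this
          _ = (a:ℝ)^2 * ((M:ℝ)+1) := by push_cast; ring
      linarith
    have hest := riemann_sum_est F (deriv F) hder hF' ((a:ℝ)^2) hpos (X/2) (3*X)
      (by linarith) hsupp M hMlt hFint hF'int
    have hsum : ∑ m ∈ Finset.range (M+1), F ((a:ℝ)^2 * m) =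
        ∑ m ∈ Finset.Icc 1 M, F ((a^2*m : ℕ)) := by
      rw [Finset.sum_range_succ']
      have hF0 : F ((a:ℝ)^2 * ((0:ℕ):ℝ)) = 0 := by
        rw [Nat.cast_zero, mul_zero]
        exact hFz 0 (fun hmem => by
          have := hmem.1; simp only [Set.mem_Icc] at hmem; linarith [hmem.1])
      rw [hF0, add_zero]
      have : Finset.Icc 1 M = Finset.Ico 1 (M+1) := by
        rw [Finset.Ico_add_one_right_eq_Icc]
      rw [this, Finset.sum_Ico_eq_sum_range]
      apply Finset.sum_congr (by norm_num)
      intro k _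
      congr 1
      push_cast
      ring
    rw [hsum] at hest
    exact hest.trans hD
  -- Step 6 : partial sum of the Moebius series
  set P := ∑ a ∈ Finset.Icc 1 A, ((moebius a : ℤ):ℝ)/(a:ℝ)^2 with hPdef
  have habsmu : ∀ a : ℕ, |((moebius a : ℤ):ℝ)| ≤ 1 := by
    intro a
    rw [← Int.cast_abs]
    exact_mod_cast abs_moebius_le_one
  have hTP : |T - P * ∫ x, F x| ≤ 5/2 * A := by
    have heq : T - P * ∫ x, F x = ∑ a ∈ Finset.Icc 1 A, ((moebius a : ℤ):ℝ) *
        ((∑ m ∈ Finset.Icc 1 (N / a^2), F ((a^2*m : ℕ))) - (1/((a:ℝ)^2)) * ∫ x, F x) := by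
      rw [hTdef, hPdef, Finset.sum_mul, ← Finset.sum_sub_distrib]
      exact Finset.sum_congr rfl (fun a _ => by ring)
    rw [heq]
    calc |∑ a ∈ Finset.Icc 1 A, ((moebius a : ℤ):ℝ) *
        ((∑ m ∈ Finset.Icc 1 (N / a^2), F ((a^2*m : ℕ))) - (1/((a:ℝ)^2)) * ∫ x, F x)|
        ≤ ∑ a ∈ Finset.Icc 1 A, |((moebius a : ℤ):ℝ) *
          ((∑ m ∈ Finset.Icc 1 (N / a^2), F ((a^2*m : ℕ))) - (1/((a:ℝ)^2)) * ∫ x, F x)| :=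
          Finset.abs_sum_le_sum_abs _ _
      _ ≤ ∑ a ∈ Finset.Icc 1 A, 5/2 := by
          apply Finset.sum_le_sum
          intro a ha
          rw [abs_mul]
          calc |((moebius a : ℤ):ℝ)| * _ ≤ 1 * (5/2) :=
                mul_le_mul (habsmu a) (hstep5 a ha) (abs_nonneg _) one_pos.le
            _ = 5/2 := by norm_num
      _ = 5/2 * A := by
          rw [Finset.sum_const, Nat.card_Icc]
          simp [nsmul_eq_mul]
          ring
  have hPtail : |P - 6/Real.pi^2| ≤ 2/((A:ℝ)+1) := by
    set f : ℕ → ℝ := fun a => ((moebius a : ℤ):ℝ)/(a:ℝ)^2 with hfdef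
    have h0 : ∑ a ∈ Finset.range (A+1), f a = P := by
      rw [Finset.sum_range_succ', hPdef]
      have hf0 : f 0 = 0 := by simp [hfdef]
      rw [hf0, add_zero]
      have : Finset.Icc 1 A = Finset.Ico 1 (A+1) := by rw [Finset.Ico_add_one_right_eq_Icc]
      rw [this, Finset.sum_Ico_eq_sum_range]
      exact Finset.sum_congr (by norm_num) (fun k _ => by rw [add_comm])
    have h1 := Summable.sum_add_tsum_nat_add (f := f) (A+1) moebius_summable
    have h2 : P - 6/Real.pi^2 = -(∑' i : ℕ, f (i + (A+1))) := by
      rw [← moebius_tsum, ← h1, h0]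
      ring
    rw [h2, abs_neg]
    set g : ℕ → ℝ := fun n => ((n:ℝ)^2)⁻¹ with hgdef
    have hg : Summable g := by
      have := Real.summable_one_div_nat_pow (p := 2) |>.mpr one_lt_two
      simpa [hgdef, one_div] using this
    have hgs : Summable (fun i : ℕ => g (i + (A+1))) := (summable_nat_add_iff (A+1)).mpr hg
    have hfs : Summable (fun i : ℕ => f (i + (A+1))) :=
      (summable_nat_add_iff (A+1)).mpr moebius_summable
    have hfabs : Summable (fun i : ℕ => |f (i + (A+1))|) := hfs.abs
    have hle1 : |∑' i : ℕ, f (i + (A+1))| ≤ ∑' i : ℕ, |f (i + (A+1))| := by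
      simpa [Real.norm_eq_abs] using norm_tsum_le_tsum_norm (f := fun i : ℕ => f (i + (A+1))) hfabs
    have hle2 : ∑' i : ℕ, |f (i + (A+1))| ≤ ∑' i : ℕ, g (i + (A+1)) := by
      apply Summable.tsum_le_tsum _ hfabs hgs
      intro i
      have hpos : (0:ℝ) < ((i + (A+1) : ℕ):ℝ)^2 := by
        have : (1:ℝ) ≤ ((i + (A+1) : ℕ):ℝ) := by exact_mod_cast Nat.one_le_iff_ne_zero.mpr (by omega)
        nlinarith
      rw [hfdef, hgdef]
      simp only [abs_div]
      rw [abs_of_pos hpos, div_le_iff₀ hpos, inv_mul_cancel₀ hpos.ne']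
      exact habsmu _
    have hle3 : ∑' i : ℕ, g (i + (A+1)) ≤ 2/((A:ℝ)+1) := by
      apply Summable.tsum_le_of_sum_le hgs
      intro s
      obtain ⟨n, hn⟩ := s.exists_nat_subset_range
      calc ∑ i ∈ s, g (i + (A+1)) ≤ ∑ i ∈ Finset.range n, g (i + (A+1)) :=
            Finset.sum_le_sum_of_subset_of_nonneg hn
              (fun i _ _ => by rw [hgdef]; positivity)
        _ = ∑ j ∈ Finset.Ioo A (A+1+n), g j := by
            rw [← Finset.Ico_add_one_left_eq_Ioo, Finset.sum_Ico_eq_sum_range]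
            apply Finset.sum_congr (by congr 1; omega)
            intro k _
            rw [add_comm]
        _ ≤ 2/((A:ℝ)+1) := by
            have := sum_Ioo_inv_sq_le (α := ℝ) A (A+1+n)
            simpa [hgdef] using this
    calc |∑' i : ℕ, f (i + (A+1))| ≤ ∑' i : ℕ, |f (i + (A+1))| := hle1
      _ ≤ ∑' i : ℕ, g (i + (A+1)) := hle2
      _ ≤ 2/((A:ℝ)+1) := hle3
  -- Step 7 : size of A
  set sX := Real.sqrt X with hsXdef
  have hsX0 : 0 < sX := Real.sqrt_pos.mpr hX0
  have hsX2 : sX^2 = X := Real.sq_sqrt hX0.le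
  have hAub : (A:ℝ) ≤ 2 * sX := by
    have h1 : A^2 ≤ N := by
      rw [hAdef]
      exact Nat.sqrt_le' N
    have h2 : ((A:ℝ))^2 ≤ 3*X := by
      calc ((A:ℝ))^2 = ((A^2 : ℕ):ℝ) := by push_cast; ring
        _ ≤ (N:ℝ) := by exact_mod_cast h1
        _ ≤ 3*X := hN3X
    nlinarith [Nat.cast_nonneg (α := ℝ) A]
  have hAlb : sX ≤ (A:ℝ) + 1 := by
    have h1 : N < (A+1)^2 := by rw [hAdef]; exact Nat.lt_succ_sqrt' N
    have h2 : 3*X < ((A:ℝ)+1)^2 := by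
      calc 3*X < (N:ℝ) + 1 := hN3X'
        _ ≤ (((A+1)^2 : ℕ):ℝ) := by exact_mod_cast h1
        _ = ((A:ℝ)+1)^2 := by push_cast; ring
    nlinarith [Nat.cast_nonneg (α := ℝ) A, hsX0]
  -- Final assembly
  have hrw : X ^ ((1:ℝ)/2) = sX := (Real.sqrt_eq_rpow X).symm
  rw [hstep1, hstep2, hstep4, hrw]
  have hsplit : T - 6/Real.pi^2 * ∫ x, F x =
      (T - P * ∫ x, F x) + (P - 6/Real.pi^2) * ∫ x, F x := by ring
  rw [hsplit]
  have hApos : (0:ℝ) < (A:ℝ) + 1 := by positivity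
  calc |(T - P * ∫ x, F x) + (P - 6/Real.pi^2) * ∫ x, F x|
      ≤ |T - P * ∫ x, F x| + |P - 6/Real.pi^2| * |∫ x, F x| := by
        refine (abs_add_le _ _).trans ?_
        rw [abs_mul]
    _ ≤ 5/2 * A + (2/((A:ℝ)+1)) * (5*X/2) := by
        refine add_le_add hTP ?_
        exact mul_le_mul hPtail hIF (abs_nonneg _) (by positivity)
    _ ≤ 5/2 * (2*sX) + (2/((A:ℝ)+1)) * (5*X/2) := by
        have := hAub
        nlinarith
    _ ≤ 20 * sX := by
        have h1 : (2/((A:ℝ)+1)) * (5*X/2) = 5*X/((A:ℝ)+1) := by field_simp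
        rw [h1]
        have h2 : 5*X/((A:ℝ)+1) ≤ 5*X/sX := by
          apply div_le_div_of_nonneg_left (by positivity) hsX0 hAlb
        have h3 : 5*X/sX = 5*sX := by
          rw [← hsX2]; field_simp
        nlinarith

end Main
end
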